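/- arXiv:1612.05766 — 5 statements merged into one kernel-verified Lean document; each statement's English description precedes it below -/
import Mathlib

section
/- For any even positive integer n and vectors u, v of length n over a commutative ring, the inner product u·v equals Σ_{i=1}^{n/2} (u_{2i-1} + v_{2i})(v_{2i-1} + u_{2i}) − Σ_{i=1}^{n/2} u_{2i-1} u_{2i} − Σ_{i=1}^{n/2} v_{2i-1} v_{2i}. -/
lemma sum_range_two_mul' {R : Type*} [AddCommMonoid R] (m : ℕ) (g : ℕ → R) :
    ∑ i ∈ Finset.range (2 * m), g i
      = ∑ i ∈ Finset.range m, (g (2 * i) + g (2 * i + 1)) := by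
  induction m with
  | zero => simp
  | succ k ih =>
      rw [Nat.mul_succ, Finset.sum_range_succ, Finset.sum_range_succ,
        Finset.sum_range_succ, ih, add_assoc]

/-- Winograd's 1968 inner-product identity: for vectors of even length `2*m`
over a commutative ring, the inner product equals the aggregated sum minus
two correction sums. Index `2*i` (0-based) is the `(2i-1)`-th (1-based)
coordinate and `2*i+1` is the `2i`-th. -/
theorem winograd_inner_product {R : Type*} [CommRing R] (m : ℕ) (hm : 0 < m)
    (u v : Fin (2 * m) → R) :
    (∑ i : Fin (2 * m), u i * v i) =
      (∑ i : Fin m,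
        (u ⟨2 * i, by omega⟩ + v ⟨2 * i + 1, by omega⟩) *
        (v ⟨2 * i, by omega⟩ + u ⟨2 * i + 1, by omega⟩))
      - (∑ i : Fin m, u ⟨2 * i, by omega⟩ * u ⟨2 * i + 1, by omega⟩)
      - (∑ i : Fin m, v ⟨2 * i, by omega⟩ * v ⟨2 * i + 1, by omega⟩) := by
  have hU : ∀ i : ℕ, i < m → 2 * i < 2 * m ∧ 2 * i + 1 < 2 * m := by omega
  set f : ℕ → R := fun i => if h : i < 2 * m then u ⟨i, h⟩ * v ⟨i, h⟩ else 0 with hf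
  have hL : (∑ i : Fin (2 * m), u i * v i) = ∑ i ∈ Finset.range (2 * m), f i := by
    rw [← Fin.sum_univ_eq_sum_range]
    exact Finset.sum_congr rfl fun i _ => by simp [hf, i.isLt]
  rw [hL, sum_range_two_mul']
  rw [← Finset.sum_sub_distrib, ← Finset.sum_sub_distrib]
  have hR : (∑ x : Fin m,
      ((u ⟨2 * x, (hU x x.isLt).1⟩ + v ⟨2 * x + 1, (hU x x.isLt).2⟩) *
        (v ⟨2 * x, (hU x x.isLt).1⟩ + u ⟨2 * x + 1, (hU x x.isLt).2⟩)
      - u ⟨2 * x, (hU x x.isLt).1⟩ * u ⟨2 * x + 1, (hU x x.isLt).2⟩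
      - v ⟨2 * x, (hU x x.isLt).1⟩ * v ⟨2 * x + 1, (hU x x.isLt).2⟩))
      = ∑ i ∈ Finset.range m,
        (if h : i < m then
          ((u ⟨2 * i, (hU i h).1⟩ + v ⟨2 * i + 1, (hU i h).2⟩) *
            (v ⟨2 * i, (hU i h).1⟩ + u ⟨2 * i + 1, (hU i h).2⟩)
          - u ⟨2 * i, (hU i h).1⟩ * u ⟨2 * i + 1, (hU i h).2⟩
          - v ⟨2 * i, (hU i h).1⟩ * v ⟨2 * i + 1, (hU i h).2⟩) else 0) := by
    rw [← Fin.sum_univ_eq_sum_range]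
    exact Finset.sum_congr rfl fun i _ => by simp [i.isLt]
  rw [hR]
  refine Finset.sum_congr rfl fun i hi => ?_
  have him : i < m := Finset.mem_range.mp hi
  have h1 : 2 * i < 2 * m := by omega
  have h2 : 2 * i + 1 < 2 * m := by omega
  simp only [hf, dif_pos h1, dif_pos h2, dif_pos him]
  ring
end

section
/- Winograd's 2×2 matrix multiplication algorithm is correct: with s1=u21+u22, s2=s1−u11, s3=u11−u21, s4=u12−s2, s5=v12−v11, s6=v22−s5, s7=v22−v12, s8=s6−v21, p1=s2·s6, p2=u11·v11, p3=u12·v21, p4=s3·s7, p5=s1·s5, p6=s4·v22, p7=u22·s8, t1=p1+p2, t2=t1+p4, t3=t1+p5, the values x11=p2+p3, x12=t3+p6, x21=t2−p7, x22=t2+p5 are the entries of the product of the 2×2 matrices U=(u_{ij}) and V=(v_{ij}). -/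
open Matrix

/-- Correctness of Winograd's 2×2 matrix multiplication algorithm
(7 multiplications, 15 additions/subtractions) over a possibly
noncommutative ring. -/
theorem winograd_2x2_correct {R : Type*} [Ring R] (U V : Matrix (Fin 2) (Fin 2) R) :
    let u11 := U 0 0; let u12 := U 0 1; let u21 := U 1 0; let u22 := U 1 1
    let v11 := V 0 0; let v12 := V 0 1; let v21 := V 1 0; let v22 := V 1 1
    let s1 := u21 + u22
    let s2 := s1 - u11
    let s3 := u11 - u21
    let s4 := u12 - s2
    let s5 := v12 - v11
    let s6 := v22 - s5
    let s7 := v22 - v12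
    let s8 := s6 - v21
    let p1 := s2 * s6
    let p2 := u11 * v11
    let p3 := u12 * v21
    let p4 := s3 * s7
    let p5 := s1 * s5
    let p6 := s4 * v22
    let p7 := u22 * s8
    let t1 := p1 + p2
    let t2 := t1 + p4
    let t3 := t1 + p5
    !![p2 + p3, t3 + p6; t2 - p7, t2 + p5] = U * V := by
  ext i j
  fin_cases i <;> fin_cases j <;>
    simp [Matrix.mul_apply, Fin.sum_univ_two] <;> noncomm_ring
end

section
/- Trilinear aggregation identity for disjoint matrix multiplication: for matrices X (m×n), Y (n×p), Z (p×m), U (n×p), V (p×m), W (m×n) over a commutative ring, trace(XYZ) + trace(UVW) = T − T1 − T2 − T3, where T = Σ_{i,j,k} (x_{ij} + u_{jk})(y_{jk} + v_{ki})(z_{ki} + w_{ij}), T1 = Σ_{i,j} x_{ij} (Σ_k (y_{jk}+v_{ki})) w_{ij}, T2 = Σ_{j,k} u_{jk} y_{jk} (Σ_i (z_{ki} + w_{ij})), and T3 = Σ_{k,i} (Σ_j (x_{ij} + u_{jk})) v_{ki} z_{ki}. -/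
private lemma swap3 {M : Type*} [AddCommMonoid M] {a b c : ℕ}
    (f : Fin a → Fin b → Fin c → M) :
    ∑ i : Fin b, ∑ j : Fin c, ∑ k : Fin a, f k i j
      = ∑ k : Fin a, ∑ i : Fin b, ∑ j : Fin c, f k i j := by
  rw [show (∑ i : Fin b, ∑ j : Fin c, ∑ k : Fin a, f k i j)
      = ∑ i : Fin b, ∑ k : Fin a, ∑ j : Fin c, f k i j from
    Finset.sum_congr rfl fun _ _ => Finset.sum_comm]
  exact Finset.sum_comm

/-- Trilinear aggregation identity for disjoint matrix multiplication:
`trace(XYZ) + trace(UVW) = T - T1 - T2 - T3`, where `T` is the sum of the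
`mnp` aggregates and `T1`, `T2`, `T3` are the three groups of correction
terms. -/
theorem trilinear_aggregation_disjoint_MM {R : Type*} [CommRing R]
    (m n p : ℕ) (hm : 0 < m) (hn : 0 < n) (hp : 0 < p)
    (x w : Fin m → Fin n → R) (y u : Fin n → Fin p → R)
    (z v : Fin p → Fin m → R) :
    (∑ i : Fin m, ∑ j : Fin n, ∑ k : Fin p, x i j * y j k * z k i)
      + (∑ i : Fin m, ∑ j : Fin n, ∑ k : Fin p, u j k * v k i * w i j) =
    (∑ i : Fin m, ∑ j : Fin n, ∑ k : Fin p,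
        (x i j + u j k) * (y j k + v k i) * (z k i + w i j))
    - (∑ i : Fin m, ∑ j : Fin n, x i j * (∑ k : Fin p, (y j k + v k i)) * w i j)
    - (∑ j : Fin n, ∑ k : Fin p, u j k * y j k * (∑ i : Fin m, (z k i + w i j)))
    - (∑ k : Fin p, ∑ i : Fin m, (∑ j : Fin n, (x i j + u j k)) * v k i * z k i) := by
  have h1 : (∑ i : Fin m, ∑ j : Fin n, x i j * (∑ k : Fin p, (y j k + v k i)) * w i j)
      = ∑ i : Fin m, ∑ j : Fin n, ∑ k : Fin p, x i j * (y j k + v k i) * w i j := by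
    refine Finset.sum_congr rfl fun i _ => Finset.sum_congr rfl fun j _ => ?_
    rw [Finset.mul_sum, Finset.sum_mul]
  have h2 : (∑ j : Fin n, ∑ k : Fin p, u j k * y j k * (∑ i : Fin m, (z k i + w i j)))
      = ∑ i : Fin m, ∑ j : Fin n, ∑ k : Fin p, u j k * y j k * (z k i + w i j) := by
    rw [← swap3 (fun i j k => u j k * y j k * (z k i + w i j))]
    exact Finset.sum_congr rfl fun j _ => Finset.sum_congr rfl fun k _ =>
      Finset.mul_sum _ _ _
  have h3 : (∑ k : Fin p, ∑ i : Fin m, (∑ j : Fin n, (x i j + u j k)) * v k i * z k i)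
      = ∑ i : Fin m, ∑ j : Fin n, ∑ k : Fin p, (x i j + u j k) * v k i * z k i := by
    rw [show (∑ i : Fin m, ∑ j : Fin n, ∑ k : Fin p, (x i j + u j k) * v k i * z k i)
        = ∑ k : Fin p, ∑ i : Fin m, ∑ j : Fin n, (x i j + u j k) * v k i * z k i from
      swap3 (fun k i j => (x i j + u j k) * v k i * z k i)]
    refine Finset.sum_congr rfl fun k _ => Finset.sum_congr rfl fun i _ => ?_
    rw [Finset.sum_mul, Finset.sum_mul]
  rw [h1, h2, h3, ← Finset.sum_sub_distrib, ← Finset.sum_sub_distrib,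
    ← Finset.sum_sub_distrib, ← Finset.sum_add_distrib]
  refine Finset.sum_congr rfl fun i _ => ?_
  rw [← Finset.sum_sub_distrib, ← Finset.sum_sub_distrib, ← Finset.sum_sub_distrib,
    ← Finset.sum_add_distrib]
  refine Finset.sum_congr rfl fun j _ => ?_
  rw [← Finset.sum_sub_distrib, ← Finset.sum_sub_distrib, ← Finset.sum_sub_distrib,
    ← Finset.sum_add_distrib]
  exact Finset.sum_congr rfl fun k _ => by ring
end

section
/- Inner product via one long multiplication (binary segmentation): let u_0,…,u_{n−1} and v_0,…,v_{n−1} be natural numbers with u_i < 2^g and v_i < 2^h, and let k = g + h + ⌈log₂ n⌉. Define U = Σ_{i=0}^{n−1} u_i 2^{ki} and V = Σ_{i=0}^{n−1} v_i 2^{k(n−1−i)}. Then the inner product Σ_{i=0}^{n−1} u_i v_i equals (U·V / 2^{k(n−1)}) mod 2^k. -/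
/-!
Put `B = 2 ^ k`, `m = n - 1`, `p = ∑ u_i X^i` and `q = ∑ v_i X^(m - i)`, so that `U = p(B)` and
`V = q(B)`. The coefficient of `X^m` in `p q` is `∑ u_i v_i`, and every coefficient of `p q` is at
most `p(1) · max_b q_b ≤ n (2^g - 1) (2^h - 1) < B`. Hence the coefficients of `p q` are exactly
the base-`B` digits of `U V = (p q)(B)`, and the `m`-th digit is `U V / B^m mod B`.
-/

open Finset Polynomial

namespace Nat

theorem sum_range_mul_pow_lt {B m : ℕ} {c : ℕ → ℕ} (hc : ∀ d < m, c d < B) :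
    ∑ d ∈ range m, c d * B ^ d < B ^ m := by
  induction m with
  | zero => simp
  | succ m ih =>
    calc ∑ d ∈ range (m + 1), c d * B ^ d
        < B ^ m + c m * B ^ m := by
          rw [sum_range_succ]
          exact Nat.add_lt_add_right (ih fun d hd => hc d (by omega)) _
      _ = (c m + 1) * B ^ m := by ring
      _ ≤ B * B ^ m := Nat.mul_le_mul_right _ (hc m (by omega))
      _ = B ^ (m + 1) := by rw [pow_succ']

theorem sum_range_mul_pow_div_pow_mod {B m N : ℕ} {c : ℕ → ℕ} (hc : ∀ d ≤ m, c d < B)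
    (hmN : m < N) : (∑ d ∈ range N, c d * B ^ d) / B ^ m % B = c m := by
  obtain ⟨r, rfl⟩ : ∃ r, N = m + 1 + r := ⟨N - (m + 1), by omega⟩
  have hB : 0 < B ^ m := pow_pos (Nat.zero_lt_of_lt (hc m le_rfl)) m
  have hlow := sum_range_mul_pow_lt fun d (hd : d < m) => hc d hd.le
  have high : ∑ x ∈ range r, c (m + 1 + x) * B ^ (m + 1 + x)
      = B ^ m * (B * ∑ x ∈ range r, c (m + 1 + x) * B ^ x) := by
    simp only [mul_sum, pow_add]
    exact sum_congr rfl fun _ _ => by ring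
  rw [sum_range_add, sum_range_succ, high, add_assoc, ← mul_comm (B ^ m), ← mul_add,
    Nat.add_mul_div_left _ _ hB, Nat.div_eq_of_lt hlow, zero_add, Nat.add_mul_mod_self_left,
    Nat.mod_eq_of_lt (hc m le_rfl)]

theorem mul_pred_pow_mul_pred_pow_lt_pow_clog (n g h : ℕ) :
    n * (2 ^ g - 1) * (2 ^ h - 1) < 2 ^ (g + h + clog 2 n) := by
  have hgh : (2 ^ g - 1) * (2 ^ h - 1) < 2 ^ (g + h) := by
    rw [pow_add]
    exact Nat.mul_lt_mul'' (by have := Nat.one_le_two_pow (n := g); omega)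
      (by have := Nat.one_le_two_pow (n := h); omega)
  calc n * (2 ^ g - 1) * (2 ^ h - 1)
      ≤ 2 ^ clog 2 n * ((2 ^ g - 1) * (2 ^ h - 1)) := by
        rw [mul_assoc]; exact Nat.mul_le_mul_right _ (le_pow_clog one_lt_two n)
    _ < 2 ^ clog 2 n * 2 ^ (g + h) := Nat.mul_lt_mul_of_pos_left hgh (by positivity)
    _ = 2 ^ (g + h + clog 2 n) := by rw [← pow_add, add_comm]

end Nat

namespace Polynomial

theorem eval_div_pow_mod {p : ℕ[X]} {B m : ℕ} (hp : ∀ d ≤ m, p.coeff d < B) :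
    p.eval B / B ^ m % B = p.coeff m := by
  rw [eval_eq_sum_range' (n := max (p.natDegree + 1) (m + 1)) (by omega)]
  exact Nat.sum_range_mul_pow_div_pow_mod hp (by omega)

theorem sum_range_coeff_le_eval_one (p : ℕ[X]) (d : ℕ) :
    ∑ a ∈ range d, p.coeff a ≤ p.eval 1 := by
  rw [eval_eq_sum_range' (n := max (p.natDegree + 1) d) (by omega)]
  simpa using sum_le_sum_of_subset (range_subset_range.2 (le_max_right _ d))

theorem coeff_mul_le_eval_one_mul {q : ℕ[X]} {H : ℕ} (hq : ∀ b, q.coeff b ≤ H) (p : ℕ[X])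
    (d : ℕ) : (p * q).coeff d ≤ p.eval 1 * H := by
  calc (p * q).coeff d
      ≤ ∑ x ∈ antidiagonal d, p.coeff x.1 * H := by
        rw [coeff_mul]; exact sum_le_sum fun x _ => Nat.mul_le_mul_left _ (hq x.2)
    _ = (∑ a ∈ range (d + 1), p.coeff a) * H := by
        rw [Nat.sum_antidiagonal_eq_sum_range_succ_mk, sum_mul]
    _ ≤ p.eval 1 * H := Nat.mul_le_mul_right _ (sum_range_coeff_le_eval_one p _)

theorem coeff_sum_C_mul_X_pow_le {ι : Type*} {s : Finset ι} {e : ι → ℕ} (he : Set.InjOn e s)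
    {a : ι → ℕ} {H : ℕ} (ha : ∀ i ∈ s, a i ≤ H) (b : ℕ) :
    (∑ i ∈ s, C (a i) * X ^ e i).coeff b ≤ H := by
  simp only [finsetSum_coeff, coeff_C_mul_X_pow]
  rw [← sum_filter]
  have hcard : #(s.filter fun i => b = e i) ≤ 1 :=
    card_le_one.2 fun i hi j hj => by
      simp only [mem_filter] at hi hj
      exact he hi.1 hj.1 (hi.2.symm.trans hj.2)
  calc ∑ i ∈ s.filter (fun i => b = e i), a i
      ≤ #(s.filter fun i => b = e i) • H :=
        sum_le_card_nsmul _ _ _ fun i hi => ha i (mem_filter.1 hi).1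
    _ ≤ H := by simpa using Nat.mul_le_mul_right H hcard

theorem coeff_sum_C_mul_X_pow_mul_sum_C_mul_X_pow_sub {R ι : Type*} [CommSemiring R]
    {s : Finset ι} {e : ι → ℕ} (he : Set.InjOn e s) {N : ℕ} (heN : ∀ i ∈ s, e i ≤ N)
    (a b : ι → R) :
    ((∑ i ∈ s, C (a i) * X ^ e i) * ∑ j ∈ s, C (b j) * X ^ (N - e j)).coeff N
      = ∑ i ∈ s, a i * b i := by
  simp only [sum_mul_sum, finsetSum_coeff]
  refine sum_congr rfl fun i hi => ?_
  have hterm : ∀ j, C (a i) * X ^ e i * (C (b j) * X ^ (N - e j))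
      = C (a i * b j) * X ^ (e i + (N - e j)) := fun j => by rw [C_mul, pow_add]; ring
  simp only [hterm, coeff_C_mul_X_pow]
  rw [sum_eq_single_of_mem i hi fun j hj hji => if_neg fun hN => hji (he hj hi ?_)]
  · have := heN i hi; rw [if_pos (by omega)]
  · have := heN j hj; omega

end Polynomial

theorem inner_product_binary_segmentation_general {n g h : ℕ}
    (u v : Fin n → ℕ) (hu : ∀ i, u i < 2 ^ g) (hv : ∀ i, v i < 2 ^ h) :
    let k := g + h + Nat.clog 2 n
    let U := ∑ i : Fin n, u i * 2 ^ (k * (i : ℕ))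
    let V := ∑ i : Fin n, v i * 2 ^ (k * (n - 1 - (i : ℕ)))
    (∑ i : Fin n, u i * v i) = (U * V / 2 ^ (k * (n - 1))) % 2 ^ k := by
  intro k U V
  set p : ℕ[X] := ∑ i : Fin n, C (u i) * X ^ (i : ℕ)
  set q : ℕ[X] := ∑ i : Fin n, C (v i) * X ^ (n - 1 - (i : ℕ))
  have hinj : Set.InjOn (fun i : Fin n => (i : ℕ)) (univ : Finset (Fin n)) :=
    Fin.val_injective.injOn
  have hinj_rev : Set.InjOn (fun i : Fin n => n - 1 - (i : ℕ)) (univ : Finset (Fin n)) :=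
    fun i _ j _ hij => Fin.ext (by have := i.isLt; have := j.isLt; simp only at hij; omega)
  have hU : p.eval (2 ^ k) = U := by simp [p, U, eval_finsetSum, pow_mul]
  have hV : q.eval (2 ^ k) = V := by simp [q, V, eval_finsetSum, pow_mul]
  have hmid : (p * q).coeff (n - 1) = ∑ i : Fin n, u i * v i :=
    coeff_sum_C_mul_X_pow_mul_sum_C_mul_X_pow_sub hinj (fun i _ => by omega) u v
  have hp1 : p.eval 1 ≤ n * (2 ^ g - 1) := by
    simpa [p, eval_finsetSum] using sum_le_card_nsmul univ u _ fun i _ => Nat.le_pred_of_lt (hu i)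
  have hcoeff (d : ℕ) : (p * q).coeff d < 2 ^ k :=
    calc (p * q).coeff d
        ≤ p.eval 1 * (2 ^ h - 1) := coeff_mul_le_eval_one_mul
          (coeff_sum_C_mul_X_pow_le hinj_rev fun i _ => Nat.le_pred_of_lt (hv i)) p d
      _ ≤ n * (2 ^ g - 1) * (2 ^ h - 1) := Nat.mul_le_mul_right _ hp1
      _ < 2 ^ k := Nat.mul_pred_pow_mul_pred_pow_lt_pow_clog n g h
  rw [pow_mul, ← hU, ← hV, ← eval_mul, eval_div_pow_mod fun d _ => hcoeff d, hmid]

/-- Inner product via one long multiplication (binary segmentation):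
with `k = g + h + ⌈log₂ n⌉`, `U = ∑ u_i 2^{k i}` and
`V = ∑ v_i 2^{k (n-1-i)}`, the inner product `∑ u_i v_i` is the middle
"digit" of the product `U * V`. -/
theorem inner_product_binary_segmentation {n g h : ℕ} (hn : 0 < n)
    (u v : Fin n → ℕ) (hu : ∀ i, u i < 2 ^ g) (hv : ∀ i, v i < 2 ^ h) :
    let k := g + h + Nat.clog 2 n
    let U := ∑ i : Fin n, u i * 2 ^ (k * (i : ℕ))
    let V := ∑ i : Fin n, v i * 2 ^ (k * (n - 1 - (i : ℕ)))
    (∑ i : Fin n, u i * v i) = (U * V / 2 ^ (k * (n - 1))) % 2 ^ k :=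
  inner_product_binary_segmentation_general u v hu hv
end

section
/- Summation via one multiplication: let v_0,…,v_{n−1} be natural numbers with v_i < 2^h, and k = h + ⌈log₂ n⌉. Define V = Σ_{i=0}^{n−1} v_i 2^{k(n−1−i)} and U = Σ_{i=0}^{n−1} 2^{ki}. Then Σ_{i=0}^{n−1} v_i = (U·V / 2^{k(n−1)}) mod 2^k. -/
/-!
`U` and `V` are the values at `X = 2^k` of `1 + X + ⋯ + X^(n-1)` and of `∑ vᵢ X^(n-1-i)`,
so `U * V` is the value at `2^k` of their product. Every coefficient of the product is a
sub-sum of the `vᵢ`, hence below `n * 2^h ≤ 2^k`, and the coefficient of `X^(n-1)` is the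
full sum. With no carries, the base-`2^k` digits of `U * V` are exactly these coefficients.
-/

open Finset Polynomial

namespace Polynomial

theorem eval_eq_mul_eval_divX_add_coeff_zero {R : Type*} [CommSemiring R] (p : R[X]) (x : R) :
    p.eval x = x * p.divX.eval x + p.coeff 0 := by
  conv_lhs => rw [← X_mul_divX_add p]
  rw [eval_add, eval_mul, eval_X, eval_C]

theorem eval_div_pow_mod_eq_coeff {b : ℕ} {p : ℕ[X]} (hp : ∀ d, p.coeff d < b) (m : ℕ) :
    p.eval b / b ^ m % b = p.coeff m := by
  induction m generalizing p with
  | zero =>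
    rw [pow_zero, Nat.div_one, eval_eq_mul_eval_divX_add_coeff_zero, Nat.mul_add_mod,
      Nat.mod_eq_of_lt (hp 0)]
  | succ m ih =>
    have hdiv : p.eval b / b = p.divX.eval b := by
      rw [eval_eq_mul_eval_divX_add_coeff_zero, Nat.mul_add_div (hp 0).pos,
        Nat.div_eq_of_lt (hp 0), add_zero]
    rw [pow_succ', ← Nat.div_div_eq_div_mul, hdiv, ih fun d => coeff_divX (p := p) ▸ hp (d + 1),
      coeff_divX]

end Polynomial

section BinarySegmentation

noncomputable def allOnesPoly (n : ℕ) : ℕ[X] := ∑ i : Fin n, X ^ (i : ℕ)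

variable {n : ℕ} (v : Fin n → ℕ)

noncomputable def revPoly : ℕ[X] := ∑ j : Fin n, C (v j) * X ^ (n - 1 - j)

theorem coeff_allOnesPoly_mul_revPoly (d : ℕ) :
    (allOnesPoly n * revPoly v).coeff d =
      ∑ j : Fin n, ∑ i : Fin n, if (i : ℕ) + (n - 1 - j) = d then v j else 0 := by
  rw [allOnesPoly, revPoly, sum_mul_sum, finsetSum_coeff, sum_comm]
  refine sum_congr rfl fun j _ => ?_
  rw [finsetSum_coeff]
  refine sum_congr rfl fun i _ => ?_
  rw [mul_left_comm, ← pow_add, coeff_C_mul_X_pow]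
  simp only [eq_comm]

theorem coeff_allOnesPoly_mul_revPoly_le (d : ℕ) :
    (allOnesPoly n * revPoly v).coeff d ≤ ∑ j, v j := by
  rw [coeff_allOnesPoly_mul_revPoly]
  refine sum_le_sum fun j _ => ?_
  -- for each `j`, at most one `i` contributes
  calc ∑ i : Fin n, (if (i : ℕ) + (n - 1 - j) = d then v j else 0)
      ≤ ∑ i ∈ range n, if i = d - (n - 1 - j) then v j else 0 := by
        rw [← Fin.sum_univ_eq_sum_range (fun i => if i = d - (n - 1 - j) then v j else 0)]
        exact sum_le_sum fun i _ => by split_ifs <;> omega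
    _ ≤ v j := by rw [sum_ite_eq']; split_ifs <;> omega

theorem coeff_allOnesPoly_mul_revPoly_sub_one :
    (allOnesPoly n * revPoly v).coeff (n - 1) = ∑ j, v j := by
  rw [coeff_allOnesPoly_mul_revPoly]
  refine sum_congr rfl fun j _ => ?_
  have hdiag (i : Fin n) : (i : ℕ) + (n - 1 - j) = n - 1 ↔ i = j := by
    rw [← Fin.val_inj]; have := i.isLt; have := j.isLt; omega
  simp only [hdiag, sum_ite_eq', mem_univ, if_true]

theorem sum_lt_two_pow_add_clog {h : ℕ} (hv : ∀ i, v i < 2 ^ h) :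
    ∑ i, v i < 2 ^ (h + Nat.clog 2 n) :=
  calc ∑ i, v i ≤ ∑ _i : Fin n, (2 ^ h - 1) :=
        sum_le_sum fun i _ => Nat.le_sub_one_of_lt (hv i)
    _ = n * (2 ^ h - 1) := by rw [sum_const, card_univ, Fintype.card_fin, smul_eq_mul]
    _ ≤ 2 ^ Nat.clog 2 n * (2 ^ h - 1) := Nat.mul_le_mul_right _ (Nat.le_pow_clog one_lt_two n)
    _ < 2 ^ Nat.clog 2 n * 2 ^ h :=
        Nat.mul_lt_mul_of_pos_left (Nat.sub_lt (by positivity) one_pos) (by positivity)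
    _ = 2 ^ (h + Nat.clog 2 n) := by rw [pow_add, mul_comm]

end BinarySegmentation

theorem summation_binary_segmentation_general {n h : ℕ}
    (v : Fin n → ℕ) (hv : ∀ i, v i < 2 ^ h) :
    let k := h + Nat.clog 2 n
    let V := ∑ i : Fin n, v i * 2 ^ (k * (n - 1 - (i : ℕ)))
    let U := ∑ i : Fin n, 2 ^ (k * (i : ℕ))
    (∑ i : Fin n, v i) = (U * V / 2 ^ (k * (n - 1))) % 2 ^ k := by
  intro k V U
  have hU : U = (allOnesPoly n).eval (2 ^ k) := by
    simp only [U, allOnesPoly, eval_finsetSum, eval_pow, eval_X, pow_mul]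
  have hV : V = (revPoly v).eval (2 ^ k) := by
    simp only [V, revPoly, eval_finsetSum, eval_mul, eval_C, eval_pow, eval_X, pow_mul]
  have hcoeff d : (allOnesPoly n * revPoly v).coeff d < 2 ^ k :=
    (coeff_allOnesPoly_mul_revPoly_le v d).trans_lt (sum_lt_two_pow_add_clog v hv)
  rw [hU, hV, ← eval_mul, pow_mul, eval_div_pow_mod_eq_coeff hcoeff]
  exact (coeff_allOnesPoly_mul_revPoly_sub_one v).symm

/-- Summation of bounded integers via one long multiplication:
with `k = h + ⌈log₂ n⌉`, `V = ∑ v_i 2^{k (n-1-i)}` and `U = ∑ 2^{k i}`,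
the sum `∑ v_i` is the middle "digit" of the product `U * V`. -/
theorem summation_binary_segmentation {n h : ℕ} (hn : 0 < n)
    (v : Fin n → ℕ) (hv : ∀ i, v i < 2 ^ h) :
    let k := h + Nat.clog 2 n
    let V := ∑ i : Fin n, v i * 2 ^ (k * (n - 1 - (i : ℕ)))
    let U := ∑ i : Fin n, 2 ^ (k * (i : ℕ))
    (∑ i : Fin n, v i) = (U * V / 2 ^ (k * (n - 1))) % 2 ^ k :=
  summation_binary_segmentation_general v hv
end
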